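/- arXiv:2005.14179 — 3 statements merged into one kernel-verified Lean document; each statement's English description precedes it below -/
import Mathlib

section
/- For a nonnegative random variable X with finite third moment and E[X²] > 0, one has Cov(X², X) ≥ (Var X / E[X²]) · E[X³]. -/
open MeasureTheory

/-- For a nonnegative random variable `X` with finite third moment and
`E[X²] > 0`, we have `Cov(X², X) ≥ (Var X / E[X²]) · E[X³]`. -/
theorem stmt_2 {Ω : Type*} [MeasurableSpace Ω] (μ : Measure Ω)
    [IsProbabilityMeasure μ] (X : Ω → ℝ)
    (hmeas : AEStronglyMeasurable X μ)
    (hnn : ∀ ω, 0 ≤ X ω)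
    (h3 : Integrable (fun ω => X ω ^ 3) μ)
    (hpos : 0 < ∫ ω, X ω ^ 2 ∂μ) :
    ((∫ ω, X ω ^ 2 ∂μ - (∫ ω, X ω ∂μ) ^ 2) / (∫ ω, X ω ^ 2 ∂μ)) *
        ∫ ω, X ω ^ 3 ∂μ ≤
      (∫ ω, X ω ^ 3 ∂μ) - (∫ ω, X ω ^ 2 ∂μ) * ∫ ω, X ω ∂μ := by
  have hbound : Integrable (fun ω => 1 + X ω ^ 3) μ :=
    (integrable_const 1).add h3
  have h1 : Integrable X μ := by
    refine hbound.mono' hmeas (Filter.Eventually.of_forall fun ω => ?_)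
    rw [Real.norm_eq_abs, abs_of_nonneg (hnn ω)]
    nlinarith [hnn ω, sq_nonneg (X ω - 1), sq_nonneg (X ω)]
  have h2 : Integrable (fun ω => X ω ^ 2) μ := by
    refine hbound.mono' (hmeas.pow 2) (Filter.Eventually.of_forall fun ω => ?_)
    rw [Real.norm_eq_abs, abs_of_nonneg (sq_nonneg _)]
    nlinarith [hnn ω, sq_nonneg (X ω - 1), sq_nonneg (X ω)]
  set E1 := ∫ ω, X ω ∂μ with hE1
  set E2 := ∫ ω, X ω ^ 2 ∂μ with hE2
  set E3 := ∫ ω, X ω ^ 3 ∂μ with hE3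
  have key : E2 ^ 2 * E1 ≤ E1 ^ 2 * E3 := by
    have hint : Integrable (fun ω => E2 ^ 2 * X ω - 2 * E2 * E1 * X ω ^ 2
        + E1 ^ 2 * X ω ^ 3) μ :=
      ((h1.const_mul _).sub (h2.const_mul _)).add (h3.const_mul _)
    have hnn' : 0 ≤ ∫ ω, (E2 ^ 2 * X ω - 2 * E2 * E1 * X ω ^ 2
        + E1 ^ 2 * X ω ^ 3) ∂μ := by
      refine integral_nonneg fun ω => ?_
      show (0:ℝ) ≤ _
      nlinarith [mul_nonneg (sq_nonneg (E2 - E1 * X ω)) (hnn ω)]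
    have heq : ∫ ω, (E2 ^ 2 * X ω - 2 * E2 * E1 * X ω ^ 2
        + E1 ^ 2 * X ω ^ 3) ∂μ = E2 ^ 2 * E1 - 2 * E2 * E1 * E2 + E1 ^ 2 * E3 := by
      have hf : Integrable (fun ω => E2 ^ 2 * X ω - 2 * E2 * E1 * X ω ^ 2) μ :=
        (h1.const_mul _).sub (h2.const_mul _)
      rw [integral_add hf (h3.const_mul _),
        integral_sub (h1.const_mul _) (h2.const_mul _),
        integral_const_mul, integral_const_mul, integral_const_mul]
    nlinarith [hnn', heq.symm.trans_le (le_of_eq rfl)]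
  rw [div_mul_eq_mul_div, div_le_iff₀ hpos]
  nlinarith [key, hpos]
end

section
/- Suppose P is a Markov transition kernel on a countable state space S with a stationary probability distribution π, and suppose h₁, h₂ are π-integrable functions each solving Poisson's equation Ph(y) − h(y) = −c(y) + π(c) for the same π-integrable cost function c, where P is irreducible and positive recurrent. Then h₁ − h₂ is π-almost everywhere constant, equal to π(h₁) − π(h₂). -/
open Classical

/-- Iterated (n-step) transition kernel of a Markov kernel `P` on a countable
state space. -/
noncomputable def kernelPow {S : Type*} (P : S → S → ℝ) : ℕ → S → S → ℝ
  | 0 => fun x y => if x = y then 1 else 0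
  | n + 1 => fun x y => ∑' z, kernelPow P n x z * P z y

lemma kernelPow_nonneg {S : Type*} {P : S → S → ℝ} (hPnn : ∀ x y, 0 ≤ P x y) :
    ∀ n x y, 0 ≤ kernelPow P n x y := by
  intro n
  induction n with
  | zero => intro x y; simp only [kernelPow]; split <;> norm_num
  | succ n ih =>
      intro x y
      simp only [kernelPow]
      exact tsum_nonneg fun z => mul_nonneg (ih x z) (hPnn z y)

/-- On a countable state space, for an irreducible (hence, given the existence of a
stationary distribution, positive recurrent) Markov kernel `P` with stationary
distribution `π`, any two `π`-integrable solutions of Poisson's equation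
`Ph - h = -c + π(c)` differ `π`-almost everywhere by the constant `π(h₁) - π(h₂)`. -/
theorem stmt_8 {S : Type*} [Countable S] (P : S → S → ℝ) (pi : S → ℝ) (c h₁ h₂ : S → ℝ)
    (hPnn : ∀ x y, 0 ≤ P x y)
    (hProw : ∀ x, HasSum (P x) 1)
    (hirr : ∀ x y, ∃ n : ℕ, 0 < kernelPow P n x y)
    (hpinn : ∀ y, 0 ≤ pi y)
    (hpisum : HasSum pi 1)
    (hstat : ∀ y, HasSum (fun x => pi x * P x y) (pi y))
    (hcint : Summable (fun y => pi y * |c y|))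
    (h₁int : Summable (fun y => pi y * |h₁ y|))
    (h₂int : Summable (fun y => pi y * |h₂ y|))
    (h₁P : ∀ y, Summable (fun z => P y z * h₁ z))
    (h₂P : ∀ y, Summable (fun z => P y z * h₂ z))
    (hpois₁ : ∀ y, (∑' z, P y z * h₁ z) - h₁ y = -c y + ∑' w, pi w * c w)
    (hpois₂ : ∀ y, (∑' z, P y z * h₂ z) - h₂ y = -c y + ∑' w, pi w * c w) :
    ∀ y, 0 < pi y →
      h₁ y - h₂ y = (∑' w, pi w * h₁ w) - (∑' w, pi w * h₂ w) := by
  -- abbreviations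
  set k : ℝ := (∑' w, pi w * h₁ w) - (∑' w, pi w * h₂ w) with hk
  set u : S → ℝ := fun y => h₁ y - h₂ y - k with hu
  set v : S → ℝ := fun y => max (u y) 0 with hv
  have hvnn : ∀ y, 0 ≤ v y := fun y => le_max_right _ _
  have huv : ∀ y, u y ≤ v y := fun y => le_max_left _ _
  -- π-integrability of h₁, h₂
  have habs : ∀ g : S → ℝ, Summable (fun y => pi y * |g y|) →
      Summable (fun y => pi y * g y) := by
    intro g hg
    rw [← summable_abs_iff]
    refine hg.congr fun y => ?_
    rw [abs_mul, abs_of_nonneg (hpinn y)]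
  have hπh₁ : Summable (fun y => pi y * h₁ y) := habs _ h₁int
  have hπh₂ : Summable (fun y => pi y * h₂ y) := habs _ h₂int
  have hπk : Summable (fun y => pi y * k) := hpisum.summable.mul_right k
  -- π-integrability of u and v
  have hπu : Summable (fun y => pi y * u y) := by
    refine ((hπh₁.sub hπh₂).sub hπk).congr fun y => ?_
    simp only [hu]; ring
  have hπabsu : Summable (fun y => pi y * |u y|) := by
    refine Summable.of_nonneg_of_le (fun y => mul_nonneg (hpinn y) (abs_nonneg _))
      (fun y => ?_) ((h₁int.add h₂int).add (hpisum.summable.mul_right |k|))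
    have : |u y| ≤ |h₁ y| + |h₂ y| + |k| := by
      simp only [hu]
      calc |h₁ y - h₂ y - k| ≤ |h₁ y - h₂ y| + |k| := abs_sub _ _
        _ ≤ |h₁ y| + |h₂ y| + |k| := by
            have := abs_sub (h₁ y) (h₂ y); linarith
    calc pi y * |u y| ≤ pi y * (|h₁ y| + |h₂ y| + |k|) :=
          mul_le_mul_of_nonneg_left this (hpinn y)
      _ = pi y * |h₁ y| + pi y * |h₂ y| + pi y * |k| := by ring
  have hπv : Summable (fun y => pi y * v y) :=
    Summable.of_nonneg_of_le (fun y => mul_nonneg (hpinn y) (hvnn y))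
      (fun y => mul_le_mul_of_nonneg_left (max_le (le_abs_self _) (abs_nonneg _)) (hpinn y))
      hπabsu
  -- ∑ π u = 0
  have hπu0 : ∑' y, pi y * u y = 0 := by
    have : (fun y => pi y * u y) = fun y => (pi y * h₁ y - pi y * h₂ y) - pi y * k := by
      funext y; simp only [hu]; ring
    rw [this, Summable.tsum_sub (hπh₁.sub hπh₂) hπk, Summable.tsum_sub hπh₁ hπh₂, tsum_mul_right,
      hpisum.tsum_eq]
    simp [hk]
  -- u is harmonic : Pu = u
  have hPk : ∀ y, Summable (fun z => P y z * k) := fun y => (hProw y).summable.mul_right k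
  have huP : ∀ y, Summable (fun z => P y z * u z) := by
    intro y
    refine (((h₁P y).sub (h₂P y)).sub (hPk y)).congr fun z => ?_
    simp only [hu]; ring
  have hPu : ∀ y, ∑' z, P y z * u z = u y := by
    intro y
    have e : (fun z => P y z * u z) =
        fun z => (P y z * h₁ z - P y z * h₂ z) - P y z * k := by
      funext z; simp only [hu]; ring
    rw [e, Summable.tsum_sub ((h₁P y).sub (h₂P y)) (hPk y), Summable.tsum_sub (h₁P y) (h₂P y),
      tsum_mul_right, (hProw y).tsum_eq, one_mul]
    have e₁ := hpois₁ y
    have e₂ := hpois₂ y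
    simp only [hu]
    linarith
  -- Pv summable and v ≤ Pv
  have hvP : ∀ y, Summable (fun z => P y z * v z) := by
    intro y
    refine Summable.of_nonneg_of_le (fun z => mul_nonneg (hPnn y z) (hvnn z))
      (fun z => ?_) (huP y).abs
    rw [abs_mul, abs_of_nonneg (hPnn y z)]
    exact mul_le_mul_of_nonneg_left (max_le (le_abs_self _) (abs_nonneg _)) (hPnn y z)
  have hvle : ∀ y, v y ≤ ∑' z, P y z * v z := by
    intro y
    refine max_le ?_ (tsum_nonneg fun z => mul_nonneg (hPnn y z) (hvnn z))
    calc u y = ∑' z, P y z * u z := (hPu y).symm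
      _ ≤ ∑' z, P y z * v z :=
        Summable.tsum_le_tsum (fun z => mul_le_mul_of_nonneg_left (huv z) (hPnn y z)) (huP y) (hvP y)
  -- Fubini: ∑_y π(y) (Pv)(y) = ∑_z π(z) v(z)
  have hGnn : ∀ p : S × S, 0 ≤ pi p.2 * (P p.2 p.1 * v p.1) :=
    fun p => mul_nonneg (hpinn _) (mul_nonneg (hPnn _ _) (hvnn _))
  have hGrow : ∀ z, Summable fun y => pi y * (P y z * v z) := by
    intro z
    refine ((hstat z).summable.mul_right (v z)).congr fun y => ?_
    ring
  have hGrowsum : ∀ z, (∑' y, pi y * (P y z * v z)) = pi z * v z := by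
    intro z
    have : (fun y => pi y * (P y z * v z)) = fun y => (pi y * P y z) * v z := by
      funext y; ring
    rw [this, tsum_mul_right, (hstat z).tsum_eq]
  have hG : Summable (fun p : S × S => pi p.2 * (P p.2 p.1 * v p.1)) := by
    refine (summable_prod_of_nonneg hGnn).mpr ⟨fun z => hGrow z, ?_⟩
    refine hπv.congr fun z => (hGrowsum z).symm
  have hF : Summable (fun p : S × S => pi p.1 * (P p.1 p.2 * v p.2)) := by
    have := (Equiv.prodComm S S).summable_iff.mpr hG
    exact this.congr fun p => rfl
  have hrowF : Summable fun y => ∑' z, pi y * (P y z * v z) := hF.prod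
  have hπPv : Summable fun y => pi y * ∑' z, P y z * v z := by
    refine hrowF.congr fun y => ?_
    rw [tsum_mul_left]
  have hfub : (∑' y, pi y * ∑' z, P y z * v z) = ∑' z, pi z * v z := by
    have hc : (∑' z, ∑' y, pi y * (P y z * v z)) = ∑' y, ∑' z, pi y * (P y z * v z) :=
      Summable.tsum_comm (f := fun y z => pi y * (P y z * v z)) hF
    calc (∑' y, pi y * ∑' z, P y z * v z) = ∑' y, ∑' z, pi y * (P y z * v z) := by
          refine tsum_congr fun y => ?_; rw [tsum_mul_left]
      _ = ∑' z, ∑' y, pi y * (P y z * v z) := hc.symm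
      _ = ∑' z, pi z * v z := tsum_congr hGrowsum
  -- v is harmonic on the support of π
  have hharm : ∀ y, 0 < pi y → (∑' z, P y z * v z) = v y := by
    intro y hy
    have hwnn : ∀ z, 0 ≤ pi z * ((∑' ζ, P z ζ * v ζ) - v z) :=
      fun z => mul_nonneg (hpinn z) (sub_nonneg.mpr (hvle z))
    have hwsum : Summable fun z => pi z * ((∑' ζ, P z ζ * v ζ) - v z) := by
      refine (hπPv.sub hπv).congr fun z => ?_; ring
    have hwt : (∑' z, pi z * ((∑' ζ, P z ζ * v ζ) - v z)) = 0 := by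
      have : (fun z => pi z * ((∑' ζ, P z ζ * v ζ) - v z)) =
          fun z => pi z * (∑' ζ, P z ζ * v ζ) - pi z * v z := by
        funext z; ring
      rw [this, Summable.tsum_sub hπPv hπv, hfub, sub_self]
    have hle := Summable.le_tsum hwsum y fun j _ => hwnn j
    rw [hwt] at hle
    have h0 : pi y * ((∑' z, P y z * v z) - v y) = 0 := le_antisymm hle (hwnn y)
    have := mul_eq_zero.mp h0
    rcases this with h | h
    · exact absurd h (ne_of_gt hy)
    · linarith [sub_eq_zero.mp h]
  -- there exists a point in the support of π where u ≤ 0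
  have hy0 : ∃ y, 0 < pi y ∧ v y = 0 := by
    by_contra hcon
    push_neg at hcon
    have hall : ∀ y, 0 < pi y → 0 < u y := by
      intro y hy
      rcases lt_or_eq_of_le (hvnn y) with h | h
      · by_contra hu'
        push_neg at hu'
        exact absurd (max_eq_right hu').symm (by rw [← hv] at *; intro he; exact hcon y hy he.symm)
      · exact absurd h.symm (hcon y hy)
    obtain ⟨y₁, hy₁⟩ : ∃ y, 0 < pi y := by
      by_contra h
      push_neg at h
      have : pi = fun _ => 0 := funext fun y => le_antisymm (h y) (hpinn y)
      have := hpisum.unique (this ▸ hasSum_zero)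
      norm_num at this
    have hnn : ∀ j, 0 ≤ pi j * u j := by
      intro j
      rcases eq_or_lt_of_le (hpinn j) with h | h
      · rw [← h]; simp
      · exact mul_nonneg (hpinn j) (le_of_lt (hall j h))
    have := Summable.le_tsum hπu y₁ fun j _ => hnn j
    rw [hπu0] at this
    have := mul_pos hy₁ (hall y₁ hy₁)
    linarith
  obtain ⟨y₀, hy₀pi, hy₀v⟩ := hy0
  -- propagation of v = 0 along paths from y₀
  have hprop : ∀ n z, 0 < kernelPow P n y₀ z → 0 < pi z ∧ v z = 0 := by
    intro n
    induction n with
    | zero =>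
        intro z hz
        simp only [kernelPow] at hz
        split at hz
        · next h => exact h ▸ ⟨hy₀pi, hy₀v⟩
        · norm_num at hz
    | succ n ih =>
        intro z hz
        simp only [kernelPow] at hz
        obtain ⟨w, hw⟩ : ∃ w, 0 < kernelPow P n y₀ w * P w z := by
          by_contra h
          push_neg at h
          have hzero : ∀ w, kernelPow P n y₀ w * P w z = 0 := fun w =>
            le_antisymm (h w) (mul_nonneg (kernelPow_nonneg hPnn n y₀ w) (hPnn w z))
          rw [tsum_congr hzero, tsum_zero] at hz
          exact lt_irrefl 0 hz
        have h1 : 0 < kernelPow P n y₀ w ∧ 0 < P w z := by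
          rcases mul_pos_iff.mp hw with h | h
          · exact h
          · exact absurd h.1 (not_lt.mpr (kernelPow_nonneg hPnn n y₀ w))
        obtain ⟨hpw, hvw⟩ := ih w h1.1
        constructor
        · have hle := le_hasSum (hstat z) w fun j _ => mul_nonneg (hpinn j) (hPnn j z)
          calc 0 < pi w * P w z := mul_pos hpw h1.2
            _ ≤ pi z := hle
        · have hsum0 : (∑' ζ, P w ζ * v ζ) = 0 := by rw [hharm w hpw, hvw]
          have hle := Summable.le_tsum (hvP w) z fun j _ => mul_nonneg (hPnn w j) (hvnn j)
          rw [hsum0] at hle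
          have h0 : P w z * v z = 0 :=
            le_antisymm hle (mul_nonneg (hPnn w z) (hvnn z))
          rcases mul_eq_zero.mp h0 with h | h
          · exact absurd h (ne_of_gt h1.2)
          · exact h
  -- hence u ≤ 0 on the support of π
  have hule : ∀ z, 0 < pi z → u z ≤ 0 := by
    intro z hz
    obtain ⟨n, hn⟩ := hirr y₀ z
    have := (hprop n z hn).2
    calc u z ≤ v z := huv z
      _ = 0 := this
  -- and since ∑ π u = 0 with nonpositive terms, u = 0 on the support of π
  intro y hy
  have hnn : ∀ j, 0 ≤ -(pi j * u j) := by
    intro j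
    rcases eq_or_lt_of_le (hpinn j) with h | h
    · rw [← h]; simp
    · simp only [neg_nonneg]
      exact mul_nonpos_of_nonneg_of_nonpos (hpinn j) (hule j h)
  have hsum' : Summable fun j => -(pi j * u j) := hπu.neg
  have htsum' : (∑' j, -(pi j * u j)) = 0 := by rw [tsum_neg, hπu0, neg_zero]
  have hle := Summable.le_tsum hsum' y fun j _ => hnn j
  rw [htsum'] at hle
  have h0 : pi y * u y = 0 := by
    have := hnn y
    linarith
  rcases mul_eq_zero.mp h0 with h | h
  · exact absurd h (ne_of_gt hy)
  · simp only [hu] at h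
    linarith
end

section
/- For the uniformized M/M/1 queue with λ+μ=1, λ<μ, and any m ≥ 3, the drift of f(y) = y^m satisfies: for y ≥ 1, P(y^m) − y^m = −m(μ−λ) y^{m−1} + r(y), where |r(y)| ≤ 2^m · y^{m−2} for all y ≥ 1. -/
open Finset

lemma key17 (n : ℕ) (x : ℝ) (hx : 1 ≤ x) (s : ℝ) (hs : |s| ≤ 1) :
    |(x+1)^(n+3) + s*(x-1)^(n+3) - (1+s)*x^(n+3) - ((n:ℝ)+3)*(1-s)*x^(n+2)|
      ≤ 2^(n+3) * x^(n+1) := by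
  have hx0 : (0:ℝ) ≤ x := le_trans zero_le_one hx
  set c : ℕ → ℝ := fun k => 1 + s * (-1)^(n+3-k) with hc
  have hcb : ∀ k, 0 ≤ c k ∧ c k ≤ 2 := by
    intro k
    have h1 : |s * (-1:ℝ)^(n+3-k)| ≤ 1 := by
      rw [abs_mul, abs_pow, abs_neg, abs_one, one_pow, mul_one]; exact hs
    have h2 := abs_le.mp h1
    constructor <;> simp only [hc] <;> linarith [h2.1, h2.2]
  have h1 : (x+1)^(n+3) = ∑ k ∈ range (n+4), x^k * ((n+3).choose k : ℝ) := by
    rw [add_pow]; simp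
  have h2 : (x-1)^(n+3) = ∑ k ∈ range (n+4), x^k * (-1)^(n+3-k) * ((n+3).choose k : ℝ) := by
    rw [sub_eq_add_neg, add_pow]
  have hmain : (x+1)^(n+3) + s*(x-1)^(n+3)
      = ∑ k ∈ range (n+4), ((n+3).choose k : ℝ) * c k * x^k := by
    rw [h1, h2, Finset.mul_sum, ← Finset.sum_add_distrib]
    exact Finset.sum_congr rfl (fun k _ => by simp only [hc]; ring)
  have heq : (x+1)^(n+3) + s*(x-1)^(n+3) - (1+s)*x^(n+3) - ((n:ℝ)+3)*(1-s)*x^(n+2)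
      = ∑ k ∈ range (n+2), ((n+3).choose k : ℝ) * c k * x^k := by
    rw [hmain, Finset.sum_range_succ, Finset.sum_range_succ]
    have e1 : c (n+3) = 1 + s := by simp [hc]
    have e2 : c (n+2) = 1 - s := by
      have : n+3-(n+2) = 1 := by omega
      simp [hc, this]; ring
    rw [e1, e2, Nat.choose_self, Nat.choose_succ_self_right]
    push_cast
    ring
  rw [heq]
  have hsumfull : ∑ k ∈ range (n+4), ((n+3).choose k : ℝ) * c k = 2^(n+3) := by
    have e1 : ∑ k ∈ range (n+4), ((n+3).choose k : ℝ) = 2^(n+3) := by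
      have := Nat.sum_range_choose (n+3)
      exact_mod_cast congrArg (Nat.cast : ℕ → ℝ) this
    have e2 : ∑ k ∈ range (n+4), (-1:ℝ)^(n+3-k) * ((n+3).choose k : ℝ) = 0 := by
      have := add_pow (1:ℝ) (-1) (n+3)
      simp at this
      exact this.symm
    calc ∑ k ∈ range (n+4), ((n+3).choose k : ℝ) * c k
        = (∑ k ∈ range (n+4), ((n+3).choose k : ℝ))
          + s * ∑ k ∈ range (n+4), (-1:ℝ)^(n+3-k) * ((n+3).choose k : ℝ) := by
          rw [Finset.mul_sum, ← Finset.sum_add_distrib]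
          exact Finset.sum_congr rfl (fun k _ => by simp only [hc]; ring)
      _ = 2^(n+3) := by rw [e1, e2]; ring
  calc |∑ k ∈ range (n+2), ((n+3).choose k : ℝ) * c k * x^k|
      ≤ ∑ k ∈ range (n+2), |((n+3).choose k : ℝ) * c k * x^k| :=
        Finset.abs_sum_le_sum_abs _ _
    _ ≤ ∑ k ∈ range (n+2), ((n+3).choose k : ℝ) * c k * x^(n+1) := by
        apply Finset.sum_le_sum
        intro k hk
        have hc0 := (hcb k).1
        have h0 : 0 ≤ ((n+3).choose k : ℝ) * c k * x^k := by positivity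
        rw [abs_of_nonneg h0]
        exact mul_le_mul_of_nonneg_left (pow_le_pow_right₀ hx (by have := Finset.mem_range.mp hk; omega))
          (mul_nonneg (by positivity) hc0)
    _ = (∑ k ∈ range (n+2), ((n+3).choose k : ℝ) * c k) * x^(n+1) := by
        rw [← Finset.sum_mul]
    _ ≤ (∑ k ∈ range (n+4), ((n+3).choose k : ℝ) * c k) * x^(n+1) := by
        apply mul_le_mul_of_nonneg_right _ (by positivity)
        apply Finset.sum_le_sum_of_subset_of_nonneg
        · exact Finset.range_subset_range.mpr (by omega)
        · intro k _ _
          exact mul_nonneg (by positivity) (hcb k).1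
    _ = 2^(n+3) * x^(n+1) := by rw [hsumfull]

/-- For the uniformized M/M/1 queue with `λ + μ = 1`, `λ < μ`, any `m ≥ 3` and any
`y ≥ 1`, the drift of `f(y) = y^m` is `-m(μ-λ) y^(m-1)` plus a remainder `r(y)`
bounded by `|r(y)| ≤ 2^m y^(m-2)`. -/
theorem stmt_17 (lam mu : ℝ) (hl : 0 < lam) (hlm : lam < mu) (hsum : lam + mu = 1)
    (m : ℕ) (hm : 3 ≤ m) :
    ∀ y : ℕ, 1 ≤ y →
      |lam * ((y : ℝ) + 1) ^ m + mu * ((y : ℝ) - 1) ^ m - (y : ℝ) ^ m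
          + (m : ℝ) * (mu - lam) * (y : ℝ) ^ (m - 1)|
        ≤ 2 ^ m * (y : ℝ) ^ (m - 2) := by
  obtain ⟨n, rfl⟩ : ∃ n, m = n + 3 := ⟨m - 3, by omega⟩
  intro y hy
  have hx : (1:ℝ) ≤ (y:ℝ) := by exact_mod_cast hy
  set x : ℝ := (y:ℝ) with hxdef
  have hg := key17 n x hx 1 (by norm_num)
  have hh := key17 n x hx (-1) (by norm_num)
  have hd0 : 0 < mu - lam := by linarith
  have hd1 : mu - lam ≤ 1 := by linarith
  have hm1 : n + 3 - 1 = n + 2 := by omega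
  have hm2 : n + 3 - 2 = n + 1 := by omega
  rw [hm1, hm2]
  have hG : (x+1)^(n+3) + 1*(x-1)^(n+3) - (1+1)*x^(n+3) - ((n:ℝ)+3)*(1-1)*x^(n+2)
      = (x+1)^(n+3) + (x-1)^(n+3) - 2*x^(n+3) := by ring
  have hH : (x+1)^(n+3) + (-1)*(x-1)^(n+3) - (1+(-1))*x^(n+3) - ((n:ℝ)+3)*(1-(-1))*x^(n+2)
      = (x+1)^(n+3) - (x-1)^(n+3) - 2*((n:ℝ)+3)*x^(n+2) := by ring
  rw [hG] at hg
  rw [hH] at hh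
  have hr : lam * (x + 1) ^ (n+3) + mu * (x - 1) ^ (n+3) - x ^ (n+3)
          + ((n:ℝ)+3) * (mu - lam) * x ^ (n+2)
      = (1/2) * ((x+1)^(n+3) + (x-1)^(n+3) - 2*x^(n+3))
        - ((mu-lam)/2) * ((x+1)^(n+3) - (x-1)^(n+3) - 2*((n:ℝ)+3)*x^(n+2)) := by
    linear_combination (((x+1)^(n+3) + (x-1)^(n+3))/2) * hsum
  have hcast : ((n + 3 : ℕ) : ℝ) = (n:ℝ) + 3 := by push_cast; ring
  rw [hcast, hr]
  have hB : (0:ℝ) ≤ 2^(n+3) * x^(n+1) := by positivity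
  calc |(1/2) * ((x+1)^(n+3) + (x-1)^(n+3) - 2*x^(n+3))
        - ((mu-lam)/2) * ((x+1)^(n+3) - (x-1)^(n+3) - 2*((n:ℝ)+3)*x^(n+2))|
      ≤ |(1/2) * ((x+1)^(n+3) + (x-1)^(n+3) - 2*x^(n+3))|
        + |((mu-lam)/2) * ((x+1)^(n+3) - (x-1)^(n+3) - 2*((n:ℝ)+3)*x^(n+2))| :=
        abs_sub _ _
    _ = (1/2) * |(x+1)^(n+3) + (x-1)^(n+3) - 2*x^(n+3)|
        + ((mu-lam)/2) * |(x+1)^(n+3) - (x-1)^(n+3) - 2*((n:ℝ)+3)*x^(n+2)| := by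
        rw [abs_mul, abs_mul, abs_of_nonneg (by norm_num : (0:ℝ) ≤ 1/2),
          abs_of_nonneg (by linarith : (0:ℝ) ≤ (mu-lam)/2)]
    _ ≤ (1/2) * (2^(n+3) * x^(n+1)) + ((mu-lam)/2) * (2^(n+3) * x^(n+1)) := by
        gcongr
    _ ≤ 2^(n+3) * x^(n+1) := by nlinarith
end
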